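/- arXiv:1811.03942 — 6 statements merged into one kernel-verified Lean document; each statement's English description precedes it below -/
import Mathlib

section
/- Let (X,T) be a minimal Cantor system, let U ⊆ X be a clopen set and let p ≥ 1 be an integer. Then for all x, y ∈ X, PS_p(x,U) = ∅ if and only if PS_p(y,U) = ∅. -/
/-!
Shifting `x` along its orbit only translates its skeleton, so the set `A` of points with a
nonempty period-`p` skeleton is `T`-invariant. Since a skeleton is invariant under translation
by `p`, it is nonempty iff it meets `{0, …, p - 1}`, which makes `A` a finite union of
intersections of preimages of the closed set `U` under homeomorphisms, hence closed. By
minimality, a closed set containing one full orbit is everything.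
-/

/-- The period-`p` skeleton of `x` relative to `U`:
`PS_p(x,U) = {k ∈ ℤ : T^{k+np} x ∈ U for all n ∈ ℤ}`. -/
def periodSkeleton {X : Type*} (T : X ≃ X) (p : ℕ) (x : X) (U : Set X) : Set ℤ :=
  {k : ℤ | ∀ n : ℤ, (T ^ (k + n * p)) x ∈ U}

open Set

def Homeomorph.toPermHom (X : Type*) [TopologicalSpace X] : (X ≃ₜ X) →* Equiv.Perm X where
  toFun := Homeomorph.toEquiv
  map_one' := rfl
  map_mul' _ _ := rfl

theorem Homeomorph.continuous_toEquiv_zpow {X : Type*} [TopologicalSpace X] (T : X ≃ₜ X)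
    (m : ℤ) : Continuous (T.toEquiv ^ m) := by
  have h : T.toEquiv ^ m = (T ^ m).toEquiv := (map_zpow (Homeomorph.toPermHom X) T m).symm
  rw [h]
  exact (T ^ m).continuous

section periodSkeleton

variable {X : Type*} (T : X ≃ X) (p : ℕ) (U : Set X)

theorem add_mul_mem_periodSkeleton_iff (z : X) (k j : ℤ) :
    k + j * p ∈ periodSkeleton T p z U ↔ k ∈ periodSkeleton T p z U := by
  simp only [periodSkeleton, mem_ofPred_eq]
  constructor <;> intro h n
  · simpa only [show k + j * p + (n - j) * p = k + n * p by ring] using h (n - j)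
  · simpa only [show k + (n + j) * p = k + j * p + n * p by ring] using h (n + j)

theorem mem_periodSkeleton_zpow_apply_iff (z : X) (k m : ℤ) :
    k ∈ periodSkeleton T p ((T ^ m) z) U ↔ k + m ∈ periodSkeleton T p z U := by
  simp only [periodSkeleton, mem_ofPred_eq, ← Equiv.Perm.mul_apply, ← zpow_add]
  exact forall_congr' fun n => by rw [add_right_comm]

theorem periodSkeleton_zpow_apply_nonempty_iff (z : X) (m : ℤ) :
    (periodSkeleton T p ((T ^ m) z) U).Nonempty ↔ (periodSkeleton T p z U).Nonempty := by
  constructor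
  · rintro ⟨k, hk⟩
    exact ⟨k + m, (mem_periodSkeleton_zpow_apply_iff T p U z k m).1 hk⟩
  · rintro ⟨k, hk⟩
    exact ⟨k - m, (mem_periodSkeleton_zpow_apply_iff T p U z _ m).2 (by simpa using hk)⟩

theorem periodSkeleton_nonempty_iff_exists_mem_Ico (hp : 0 < p) (z : X) :
    (periodSkeleton T p z U).Nonempty ↔ ∃ k ∈ Ico (0 : ℤ) p, k ∈ periodSkeleton T p z U := by
  refine ⟨fun ⟨k, hk⟩ => ?_, fun ⟨k, _, hk⟩ => ⟨k, hk⟩⟩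
  have hp' : (0 : ℤ) < p := by exact_mod_cast hp
  refine ⟨k % p, ⟨Int.emod_nonneg k hp'.ne', Int.emod_lt_of_pos k hp'⟩, ?_⟩
  rwa [← add_mul_mem_periodSkeleton_iff T p U z (k % p) (k / p), mul_comm,
    Int.emod_add_mul_ediv]

end periodSkeleton

section minimal

variable {X : Type*} [TopologicalSpace X] (T : X ≃ₜ X) {p : ℕ} {U : Set X}

theorem isClosed_setOf_periodSkeleton_nonempty (hU : IsClosed U) (hp : 0 < p) :
    IsClosed {z | (periodSkeleton T.toEquiv p z U).Nonempty} := by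
  have hA : {z | (periodSkeleton T.toEquiv p z U).Nonempty} =
      ⋃ k ∈ Ico (0 : ℤ) p, ⋂ n : ℤ, (T.toEquiv ^ (k + n * p)) ⁻¹' U := by
    ext z
    rw [mem_ofPred_eq, periodSkeleton_nonempty_iff_exists_mem_Ico _ p U hp]
    simp only [periodSkeleton, mem_ofPred_eq, mem_iUnion, mem_iInter, mem_preimage, exists_prop]
  rw [hA]
  exact (finite_Ico _ _).isClosed_biUnion fun k _ =>
    isClosed_iInter fun n => hU.preimage (T.continuous_toEquiv_zpow _)

theorem periodSkeleton_nonempty_of_dense_orbit (hU : IsClosed U) (hp : 0 < p) {a : X}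
    (hdense : Dense (range fun n : ℤ => (T.toEquiv ^ n) a))
    (ha : (periodSkeleton T.toEquiv p a U).Nonempty) (b : X) :
    (periodSkeleton T.toEquiv p b U).Nonempty :=
  hdense.induction
    (by
      rintro _ ⟨n, rfl⟩
      exact (periodSkeleton_zpow_apply_nonempty_iff T.toEquiv p U a n).2 ha)
    (isClosed_setOf_periodSkeleton_nonempty T hU hp) b

end minimal

theorem skeleton_empty_iff_general
    {X : Type*} [MetricSpace X]
    (T : X ≃ₜ X)
    (hmin : ∀ x : X, Dense (Set.range fun n : ℤ => (T.toEquiv ^ n) x))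
    (U : Set X) (hU : IsClopen U)
    (p : ℕ) (hp : 1 ≤ p) (x y : X) :
    periodSkeleton T.toEquiv p x U = ∅ ↔ periodSkeleton T.toEquiv p y U = ∅ := by
  simp only [← not_nonempty_iff_eq_empty]
  exact not_congr
    ⟨fun hx => periodSkeleton_nonempty_of_dense_orbit T hU.isClosed hp (hmin x) hx y,
      fun hy => periodSkeleton_nonempty_of_dense_orbit T hU.isClosed hp (hmin y) hy x⟩

/-- Let `(X,T)` be a minimal Cantor system, `U ⊆ X` clopen, `p ≥ 1`. Then for all
`x, y ∈ X`, `PS_p(x,U) = ∅` iff `PS_p(y,U) = ∅`. -/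
theorem skeleton_empty_iff
    {X : Type*} [MetricSpace X] [CompactSpace X] [Nonempty X]
    [TotallyDisconnectedSpace X]
    (hperf : ∀ x : X, (nhdsWithin x {x}ᶜ).NeBot)
    (T : X ≃ₜ X)
    (hmin : ∀ x : X, Dense (Set.range fun n : ℤ => (T.toEquiv ^ n) x))
    (U : Set X) (hU : IsClopen U)
    (p : ℕ) (hp : 1 ≤ p) (x y : X) :
    periodSkeleton T.toEquiv p x U = ∅ ↔ periodSkeleton T.toEquiv p y U = ∅ :=
  skeleton_empty_iff_general T hmin U hU p hp x y
end

section
/- Let (X,T) be a minimal topological dynamical system and let (X',T') be a factor of (X,T). Then ℙ(X',T') ⊆ ℙ(X,T). -/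
/-- `p` is an essential period of `x` for `U`. -/
def IsEssentialPeriod {X : Type*} (T : X ≃ X) (p : ℕ) (x : X) (U : Set X) : Prop :=
  periodSkeleton T p x U ≠ ∅ ∧
    ∀ q : ℤ, periodSkeleton T p x U = (fun k => k - q) '' periodSkeleton T p x U →
      (p : ℤ) ∣ q

/-- The periodic spectrum `ℙ(X,T)`: integers `p ≥ 2` that are an essential period of
some point of `X` for some clopen set `U`. -/
def periodicSpectrum {X : Type*} [TopologicalSpace X] (T : X ≃ₜ X) : Set ℕ :=
  {p : ℕ | 2 ≤ p ∧ ∃ (x : X) (U : Set X), IsClopen U ∧ IsEssentialPeriod T.toEquiv p x U}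

/-!
A factor map `π` carries the `T`-orbit of `x` onto the `T'`-orbit of `π x`, so the visits of
the first orbit to `π ⁻¹' U` are exactly the visits of the second to `U`: the two skeletons
coincide. Hence an essential period of `π x` for a clopen `U` is an essential period of `x` for
the clopen set `π ⁻¹' U`.
-/

open Function

theorem Function.Semiconj.perm_zpow {X Y : Type*} {π : X → Y} {T : Equiv.Perm X}
    {T' : Equiv.Perm Y} (h : Semiconj π T T') : ∀ n : ℤ, Semiconj π ⇑(T ^ n) ⇑(T' ^ n)
  | (n : ℕ) => by simpa only [zpow_natCast, Equiv.Perm.coe_pow] using h.iterate_right n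
  | .negSucc n => by
    have hpow : Semiconj π ⇑(T ^ (n + 1)) ⇑(T' ^ (n + 1)) := by
      simpa only [Equiv.Perm.coe_pow] using h.iterate_right (n + 1)
    rw [zpow_negSucc, zpow_negSucc]
    exact hpow.inverses_right (T ^ (n + 1)).apply_symm_apply (T' ^ (n + 1)).symm_apply_apply

section Factor

variable {X Y : Type*} {T : X ≃ X} {T' : Y ≃ Y} {π : X → Y}

theorem periodSkeleton_preimage (h : Semiconj π T T') (p : ℕ) (x : X) (U : Set Y) :
    periodSkeleton T p x (π ⁻¹' U) = periodSkeleton T' p (π x) U := by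
  ext k
  exact forall_congr' fun n => by rw [Set.mem_preimage, h.perm_zpow]

theorem isEssentialPeriod_preimage_iff (h : Semiconj π T T') {p : ℕ} {x : X} {U : Set Y} :
    IsEssentialPeriod T p x (π ⁻¹' U) ↔ IsEssentialPeriod T' p (π x) U := by
  rw [IsEssentialPeriod, IsEssentialPeriod, periodSkeleton_preimage h]

end Factor

theorem periodicSpectrum_factor_subset_general
    {X X' : Type*} [MetricSpace X]
    [MetricSpace X']
    (T : X ≃ₜ X) (T' : X' ≃ₜ X')
    (π : X → X') (hπcont : Continuous π) (hπsurj : Function.Surjective π)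
    (hπ : ∀ x : X, π (T x) = T' (π x)) :
    periodicSpectrum T' ⊆ periodicSpectrum T := by
  rintro p ⟨hp, x', U', hU', hess⟩
  obtain ⟨x, rfl⟩ := hπsurj x'
  have hsemiconj : Semiconj π T.toEquiv T'.toEquiv := hπ
  exact ⟨hp, x, π ⁻¹' U', hU'.preimage hπcont, (isEssentialPeriod_preimage_iff hsemiconj).2 hess⟩

/-- If `(X',T')` is a factor of the minimal system `(X,T)`, then `ℙ(X',T') ⊆ ℙ(X,T)`. -/
theorem periodicSpectrum_factor_subset
    {X X' : Type*} [MetricSpace X] [CompactSpace X] [Nonempty X]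
    [MetricSpace X'] [CompactSpace X'] [Nonempty X']
    (T : X ≃ₜ X) (T' : X' ≃ₜ X')
    (hmin : ∀ x : X, Dense (Set.range fun n : ℤ => (T.toEquiv ^ n) x))
    (π : X → X') (hπcont : Continuous π) (hπsurj : Function.Surjective π)
    (hπ : ∀ x : X, π (T x) = T' (π x)) :
    periodicSpectrum T' ⊆ periodicSpectrum T :=
  periodicSpectrum_factor_subset_general T T' π hπcont hπsurj hπ
end

section
/- Let x ∈ A^ℤ be a sturmian sequence. Then x admits no constant arithmetic subsequence: there are no integer p ≥ 1, integer k ∈ ℤ and letter a ∈ A such that x_{k+np} = a for all n ∈ ℤ. -/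
/-- `x` is uniformly recurrent: every finite factor of `x` occurs in `x` with bounded
gaps. -/
def UniformlyRecurrent {A : Type*} (x : ℤ → A) : Prop :=
  ∀ (m : ℕ) (i : ℤ), ∃ B : ℕ, ∀ k : ℤ, ∃ j : ℤ, k ≤ j ∧ j ≤ k + B ∧
    ∀ t : Fin m, x (j + t) = x (i + t)

/-- The complexity function of `x`: the number of distinct factors of length `n`. -/
noncomputable def complexity {A : Type*} (x : ℤ → A) (n : ℕ) : ℕ :=
  Nat.card {w : Fin n → A | ∃ i : ℤ, ∀ j : Fin n, w j = x (i + j)}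

/-- `x` is sturmian: uniformly recurrent with complexity `n + 1`. -/
def IsSturmian {A : Type*} (x : ℤ → A) : Prop :=
  UniformlyRecurrent x ∧ ∀ n : ℕ, complexity x n = n + 1

/-!
Since `complexity x 1 = 2`, the sequence takes two values and may be read as a boolean sequence.
It is then balanced: a minimal imbalance gives a palindrome `w` with `1w1` and `0w0` factors; as
only `w` is right special among the factors of its length, `w` returns within `|w| + 1` steps,
and the palindrome property then makes `1w0` and `0w1` factors too. So `1w` and `0w` are both
right special, which complexity `n + 1` forbids. A balanced sequence codes a rotation: there are
`β` and phases `θ i ∈ [0, 1]` with `θ (i + 1) = θ i + β - x i`, so `x i = 1` forces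
`θ i ≥ 1 - β`. For rational `β` the sequence would be eventually periodic, so `β` and `p β` are
irrational, and the phases `θ (k + n p) ≡ θ k + n p β (mod 1)` enter `(0, 1 - β)`, where `x`
takes the value `0`.
-/

open Function Set

lemma ncard_add_two_le_of_subset_image {α β : Type*} {s : Set α} {t : Set β} (hs : s.Finite)
    (f : α → β) (hst : t ⊆ f '' s) {a a' b b' : α} (ha : a ∈ s) (ha' : a' ∈ s) (hb : b ∈ s)
    (hb' : b' ∈ s) (haa' : a ≠ a') (hbb' : b ≠ b') (hfa : f a = f a') (hfb : f b = f b')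
    (hab : f a ≠ f b) :
    t.ncard + 2 ≤ s.ncard := by
  have hsub : ({a', b'} : Set α) ⊆ s := pair_subset ha' hb'
  have ha'b' : a' ≠ b' := fun h => hab (by rw [hfa, hfb, h])
  have hrest : t ⊆ f '' (s \ {a', b'}) := by
    rintro y hy
    obtain ⟨z, hz, rfl⟩ := hst hy
    by_cases hza : z = a'
    · refine ⟨a, ⟨ha, ?_⟩, by rw [hfa, hza]⟩
      rintro (h | h)
      · exact haa' h
      · exact hab (by rw [h, hfb])
    by_cases hzb : z = b'
    · refine ⟨b, ⟨hb, ?_⟩, by rw [hfb, hzb]⟩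
      rintro (h | h)
      · exact hab (by rw [hfa, h])
      · exact hbb' h
    exact ⟨z, ⟨hz, by rintro (h | h) <;> contradiction⟩, rfl⟩
  calc t.ncard + 2 ≤ (s \ {a', b'}).ncard + ({a', b'} : Set α).ncard := by
        rw [ncard_pair ha'b']
        exact Nat.add_le_add_right
          ((ncard_le_ncard hrest (hs.sdiff.image f)).trans (ncard_image_le hs.sdiff)) 2
    _ = s.ncard := ncard_sdiff_add_ncard_of_subset hsub hs

section Words

variable {A : Type*} {x : ℤ → A} {n : ℕ}

def window (x : ℤ → A) (n : ℕ) (i : ℤ) : Fin n → A := fun t => x (i + t)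

@[simp]
lemma window_apply (x : ℤ → A) (n : ℕ) (i : ℤ) (t : Fin n) : window x n i t = x (i + t) := rfl

lemma complexity_eq_ncard (x : ℤ → A) (n : ℕ) : complexity x n = (range (window x n)).ncard := by
  rw [complexity, ← Nat.card_coe_set_eq]
  congr! 2
  ext w
  simp [funext_iff, eq_comm]

lemma init_window (x : ℤ → A) (n : ℕ) (i : ℤ) : Fin.init (window x (n + 1) i) = window x n i :=
  rfl

lemma window_succ_eq_cons (x : ℤ → A) (n : ℕ) (i : ℤ) :
    window x (n + 1) i = Fin.cons (x i) (window x n (i + 1)) := by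
  ext t
  refine Fin.cases ?_ (fun t => ?_) t
  · simp
  · simp only [window_apply, Fin.cons_succ, Fin.val_succ]
    congr 1
    push_cast
    ring

lemma window_succ_eq_of_window_eq {i j : ℤ} (h : window x n i = window x n j)
    (hn : x (i + n) = x (j + n)) : window x n (i + 1) = window x n (j + 1) := by
  ext t
  rcases Nat.lt_or_ge (t + 1) n with ht | ht
  · simpa [add_assoc, add_comm (1 : ℤ)] using congrFun h ⟨t + 1, ht⟩
  · have : (t : ℕ) + 1 = n := by omega
    simpa [add_assoc, add_comm (1 : ℤ), ← this] using hn

def IsRightSpecial (x : ℤ → A) {n : ℕ} (w : Fin n → A) : Prop :=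
  ∃ i j, window x n i = w ∧ window x n j = w ∧ x (i + n) ≠ x (j + n)

lemma ncard_range_window_add_two_le [Finite A] {u v : Fin n → A} (hu : IsRightSpecial x u)
    (hv : IsRightSpecial x v) (huv : u ≠ v) :
    (range (window x n)).ncard + 2 ≤ (range (window x (n + 1))).ncard := by
  obtain ⟨i, i', rfl, hi', hii'⟩ := hu
  obtain ⟨j, j', rfl, hj', hjj'⟩ := hv
  refine ncard_add_two_le_of_subset_image (toFinite _) Fin.init ?_ (mem_range_self i)
    (mem_range_self i') (mem_range_self j) (mem_range_self j') (fun h => hii' ?_)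
    (fun h => hjj' ?_) hi'.symm hj'.symm huv
  · rintro _ ⟨l, rfl⟩
    exact ⟨window x (n + 1) l, mem_range_self l, rfl⟩
  · exact congrFun h (Fin.last n)
  · exact congrFun h (Fin.last n)

namespace UniformlyRecurrent

lemma exists_window_eq_ge (hx : UniformlyRecurrent x) (n : ℕ) (i K : ℤ) :
    ∃ j, K ≤ j ∧ window x n j = window x n i := by
  obtain ⟨B, hB⟩ := hx n i
  obtain ⟨j, hKj, -, hj⟩ := hB K
  exact ⟨j, hKj, funext hj⟩

lemma ncard_range_window_succ_le [Finite A] (hx : UniformlyRecurrent x) {v : ℕ} (hv : 0 < v)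
    {N : ℤ} (hper : ∀ i ≥ N, x (i + v) = x i) :
    (range (window x (v + 1))).ncard ≤ (range (window x v)).ncard := by
  have hlast : ∀ i, window x (v + 1) i (Fin.last v) = window x (v + 1) i ⟨0, by omega⟩ := by
    intro i
    obtain ⟨j, hNj, hj⟩ := hx.exists_window_eq_ge (v + 1) i N
    rw [← hj]
    simpa using hper j hNj
  refine ncard_le_ncard_of_injOn Fin.init (by rintro _ ⟨i, rfl⟩; exact ⟨i, rfl⟩) ?_
  rintro _ ⟨i, rfl⟩ _ ⟨j, rfl⟩ h
  rw [← Fin.snoc_init_self (window x (v + 1) i), ← Fin.snoc_init_self (window x (v + 1) j), h,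
    hlast, hlast]
  congr 1
  exact congrFun h ⟨0, hv⟩

end UniformlyRecurrent

namespace IsSturmian

lemma eq_of_isRightSpecial [Finite A] (hx : IsSturmian x) {u v : Fin n → A}
    (hu : IsRightSpecial x u) (hv : IsRightSpecial x v) : u = v := by
  by_contra huv
  have := ncard_range_window_add_two_le hu hv huv
  rw [← complexity_eq_ncard, ← complexity_eq_ncard, hx.2, hx.2] at this
  omega

lemma not_eventually_periodic [Finite A] (hx : IsSturmian x) {v : ℕ} (hv : 0 < v)
    (N : ℤ) : ¬ ∀ i ≥ N, x (i + v) = x i := by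
  intro hper
  have := hx.1.ncard_range_window_succ_le hv hper
  rw [← complexity_eq_ncard, ← complexity_eq_ncard, hx.2, hx.2] at this
  omega

lemma exists_forall_eq_or_eq (hx : IsSturmian x) (i : ℤ) :
    ∃ j, x j ≠ x i ∧ ∀ l, x l = x i ∨ x l = x j := by
  have hrange : (range x).ncard = 2 := by
    have hr : range (window x 1) = (fun c _ => c) '' range x := by
      rw [← range_comp]
      congr
      funext j t
      simp [Fin.fin_one_eq_zero t]
    have := hx.2 1
    rwa [complexity_eq_ncard, hr, ncard_image_of_injective _ fun a b h => congrFun h 0] at this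
  obtain ⟨b, hb⟩ := ncard_eq_one.1 (show (range x \ {x i}).ncard = 1 by
    rw [ncard_sdiff_singleton_of_mem (mem_range_self i), hrange])
  obtain ⟨⟨j, rfl⟩, hji⟩ : b ∈ range x \ {x i} := by rw [hb]; rfl
  refine ⟨j, hji, fun l => or_iff_not_imp_left.2 fun hl => ?_⟩
  simpa [hb] using (show x l ∈ range x \ {x i} from ⟨mem_range_self l, hl⟩)

end IsSturmian

lemma isSturmian_comp_iff {B : Type*} {f : B → A} (hf : Injective f) {y : ℤ → B} :
    IsSturmian (f ∘ y) ↔ IsSturmian y := by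
  have hc : ∀ n, complexity (f ∘ y) n = complexity y n := by
    intro n
    rw [complexity_eq_ncard, complexity_eq_ncard,
      show window (f ∘ y) n = (f ∘ ·) ∘ window y n from rfl, range_comp,
      ncard_image_of_injective _ hf.comp_left]
  simp only [IsSturmian, UniformlyRecurrent, hc, comp_apply, hf.eq_iff]

end Words

section ReturnWords

variable {A : Type*} {x : ℤ → A} {n : ℕ}

lemma window_add_eq_of_not_isRightSpecial {i j : ℤ} (h : window x n i = window x n j) (T : ℕ)
    (hT : ∀ t < T, ¬ IsRightSpecial x (window x n (i + t))) :
    window x n (i + T) = window x n (j + T) := by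
  induction T with
  | zero => simpa using h
  | succ T ih =>
    have hw := ih fun t ht => hT t (by omega)
    have hnext : x (i + T + n) = x (j + T + n) := by
      by_contra hne
      exact hT T (by omega) ⟨i + T, j + T, rfl, hw.symm, hne⟩
    push_cast
    simpa [add_assoc] using window_succ_eq_of_window_eq hw hnext

-- Two equal windows before the next occurrence of `w` would continue equally and reach `w` early.
lemma le_ncard_of_next_occurrence [Finite A] {w : Fin n → A}
    (hdet : ∀ u : Fin n → A, IsRightSpecial x u → u = w) {r q : ℤ}
    (hq : window x n (r + q) = w) (hmin : ∀ d, 0 < d → d < q → window x n (r + d) ≠ w) :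
    q ≤ (range (window x n)).ncard := by
  set K := (range (window x n)).ncard
  by_contra! hqK
  have hcoll : ∀ d₁ d₂ : ℕ, d₁ < d₂ → d₂ < K →
      window x n (r + 1 + d₁) ≠ window x n (r + 1 + d₂) := by
    intro d₁ d₂ hd hd₂ heq
    have := window_add_eq_of_not_isRightSpecial heq (q - 1 - d₂).toNat fun t ht hsp =>
      hmin (1 + d₁ + t) (by omega) (by omega) (by rw [← hdet _ hsp]; congr 1; ring)
    rw [show r + 1 + d₂ + ((q - 1 - d₂).toNat : ℕ) = r + q by omega, hq] at this
    exact hmin (1 + d₁ + (q - 1 - d₂).toNat) (by omega) (by omega)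
      (by rw [← this]; congr 1; ring)
  have hw : w ∈ range (window x n) := ⟨r + q, hq⟩
  obtain ⟨d₁, hd₁, d₂, hd₂, hne, heq⟩ := exists_ne_map_eq_of_ncard_lt_of_maps_to
    (s := (Finset.range K : Set ℕ)) (t := range (window x n) \ {w})
    (f := fun d : ℕ => window x n (r + 1 + d))
    (by rw [ncard_sdiff_singleton_of_mem hw, ncard_coe_finset, Finset.card_range]
        have : 0 < K := (ncard_pos (toFinite _)).2 ⟨w, hw⟩
        omega)
    (fun d hd => ⟨mem_range_self _, fun h => hmin (1 + d) (by omega) (by simp at hd; omega)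
      (by rw [← mem_singleton_iff.1 h]; congr 1; ring)⟩)
  simp only [Finset.coe_range, mem_Iio] at hd₁ hd₂
  rcases Nat.lt_or_gt_of_ne hne with h | h
  · exact hcoll d₁ d₂ h hd₂ heq
  · exact hcoll d₂ d₁ h hd₁ heq.symm

lemma apply_sub_one_eq_of_palindrome {r q : ℤ} (hw : window x n r ∘ Fin.rev = window x n r)
    (hq : window x n (r + q) = window x n r) (hq₀ : 0 < q) (hqn : q ≤ n + 1) :
    x (r + q - 1) = x (r + n) := by
  rcases hqn.eq_or_lt with rfl | hqn
  · congr 1; ring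
  set t : Fin n := ⟨(q - 1).toNat, by omega⟩
  calc x (r + q - 1) = x (r + t) := by congr 1; simp [t]; omega
    _ = x (r + (Fin.rev t : ℕ)) := by simpa using (congrFun hw t).symm
    _ = x (r + q + (Fin.rev t : ℕ)) := by simpa using (congrFun hq (Fin.rev t)).symm
    _ = x (r + n) := by congr 1; simp [t]; omega

lemma UniformlyRecurrent.exists_consecutive_occurrences (hx : UniformlyRecurrent x)
    {w : Fin n → A} {i j : ℤ} (hi : window x n i = w) (hj : window x n j = w)
    (hij : x (i + n) ≠ x (j + n)) :
    ∃ r q, 0 < q ∧ window x n r = w ∧ window x n (r + q) = w ∧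
      (∀ d, 0 < d → d < q → window x n (r + d) ≠ w) ∧
      x (r + n) = x (i + n) ∧ x (r + q + n) ≠ x (i + n) := by
  obtain ⟨s, his, hsj⟩ := hx.exists_window_eq_ge (n + 1) j (i + 1)
  have hsw : window x n s = w := by rw [← init_window, hsj, init_window, hj]
  have hsn : x (s + n) = x (j + n) := congrFun hsj (Fin.last n)
  obtain ⟨r, ⟨hir, hrs, hrw, hrn⟩, hrmax⟩ := Int.exists_greatest_of_bdd
    (P := fun r => i ≤ r ∧ r < s ∧ window x n r = w ∧ x (r + n) = x (i + n))
    ⟨s, fun z hz => hz.2.1.le⟩ ⟨i, le_rfl, by omega, hi, rfl⟩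
  obtain ⟨z, ⟨hrz, hzw⟩, hzmin⟩ := Int.exists_least_of_bdd
    (P := fun z => r < z ∧ window x n z = w) ⟨r, fun z hz => hz.1.le⟩ ⟨s, hrs, hsw⟩
  refine ⟨r, z - r, by omega, hrw, by simpa using hzw, fun d hd hdq hdw => ?_, hrn, ?_⟩
  · have := hzmin (r + d) ⟨by omega, hdw⟩
    omega
  · rw [add_sub_cancel]
    intro hzn
    rcases (hzmin s ⟨hrs, hsw⟩).lt_or_eq with h | rfl
    · have := hrmax z ⟨by omega, h, hzw, hzn⟩
      omega
    · exact hij (hzn.symm.trans hsn)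

/-- A return of `w` takes at most `n + 1` steps, so by the palindrome property the letter before
the next occurrence of `w` is the letter after the previous one. -/
lemma IsSturmian.isRightSpecial_window_succ [Finite A] (hx : IsSturmian x) {w : Fin n → A}
    (hpal : w ∘ Fin.rev = w) (hw : IsRightSpecial x w) {s : ℤ} (hs : window x n (s + 1) = w)
    (hss : x s = x (s + 1 + n)) : IsRightSpecial x (window x (n + 1) s) := by
  have hdet : ∀ u : Fin n → A, IsRightSpecial x u → u = w := fun u hu =>
    hx.eq_of_isRightSpecial hu hw
  obtain ⟨i, j, hi, hj, hij⟩ := hw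
  obtain ⟨j', hj', hj'n⟩ : ∃ j', window x n j' = w ∧ x (s + 1 + n) ≠ x (j' + n) := by
    by_cases h : x (s + 1 + n) = x (i + n)
    · exact ⟨j, hj, h ▸ hij⟩
    · exact ⟨i, hi, h⟩
  obtain ⟨r, q, hq₀, hr, hrq, hmin, hrn, hrqn⟩ := hx.1.exists_consecutive_occurrences hs hj' hj'n
  have hqn : q ≤ n + 1 := by
    have := le_ncard_of_next_occurrence hdet hrq hmin
    rwa [← complexity_eq_ncard, hx.2, Nat.cast_add_one] at this
  have hlet : x (r + q - 1) = x s := by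
    rw [apply_sub_one_eq_of_palindrome (hr ▸ hpal) (hrq.trans hr.symm) hq₀ hqn, hrn, hss]
  refine ⟨s, r + q - 1, rfl, ?_, ?_⟩
  · rw [window_succ_eq_cons, window_succ_eq_cons, hlet, sub_add_cancel, hrq, hs]
  · rw [show r + q - 1 + ((n + 1 : ℕ) : ℤ) = r + q + n by push_cast; ring,
      show s + ((n + 1 : ℕ) : ℤ) = s + 1 + n by push_cast; ring]
    exact hrqn.symm

end ReturnWords

section Balance

variable {x : ℤ → Bool}

def trueCount (x : ℤ → Bool) (i : ℤ) (m : ℕ) : ℕ :=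
  ∑ t ∈ Finset.range m, (x (i + t)).toNat

@[simp]
lemma trueCount_zero (x : ℤ → Bool) (i : ℤ) : trueCount x i 0 = 0 := by
  simp [trueCount]

lemma trueCount_succ (x : ℤ → Bool) (i : ℤ) (m : ℕ) :
    trueCount x i (m + 1) = trueCount x i m + (x (i + m)).toNat :=
  Finset.sum_range_succ _ _

lemma trueCount_succ' (x : ℤ → Bool) (i : ℤ) (m : ℕ) :
    trueCount x i (m + 1) = (x i).toNat + trueCount x (i + 1) m := by
  rw [trueCount, trueCount, Finset.sum_range_succ', add_comm]
  simp only [Nat.cast_add, Nat.cast_one, Nat.cast_zero, add_zero, add_assoc, add_comm (1 : ℤ)]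

lemma trueCount_add (x : ℤ → Bool) (i : ℤ) (m l : ℕ) :
    trueCount x i (m + l) = trueCount x i m + trueCount x (i + m) l := by
  simp only [trueCount, Finset.sum_range_add, Nat.cast_add, add_assoc]

lemma trueCount_le (x : ℤ → Bool) (i : ℤ) (m : ℕ) : trueCount x i m ≤ m := by
  calc trueCount x i m ≤ ∑ _t ∈ Finset.range m, 1 :=
        Finset.sum_le_sum fun t _ => Bool.toNat_le (x (i + t))
    _ = m := by simp

lemma add_eq_of_trueCount_eq {v : ℕ} {N : ℤ} {C : ℤ}
    (h : ∀ i ≥ N, (trueCount x i v : ℤ) = C) : ∀ i ≥ N, x (i + v) = x i := by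
  intro i hi
  have e₁ := trueCount_succ x i v
  have e₂ := trueCount_succ' x i v
  have h₁ := h i hi
  have h₂ := h (i + 1) (by omega)
  have : (x (i + v)).toNat = (x i).toNat := by omega
  revert this
  cases x (i + v) <;> cases x i <;> simp

lemma window_eq_of_trueCount_eq {n : ℕ} {i j : ℤ}
    (h : ∀ t ≤ n, trueCount x i t = trueCount x j t) : window x n i = window x n j := by
  ext t
  have h₁ := h (t + 1) t.2
  rw [trueCount_succ, trueCount_succ, h t t.2.le, Nat.add_left_cancel_iff] at h₁
  simp only [window_apply]
  revert h₁
  cases x (i + t) <;> cases x (j + t) <;> simp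

lemma window_comp_rev_eq_of_trueCount_eq {n : ℕ} {i : ℤ}
    (h : ∀ t ≤ n, trueCount x i t = trueCount x (i + (n - t : ℕ)) t) :
    window x n i ∘ Fin.rev = window x n i := by
  ext t
  have h₁ := h (t + 1) t.2
  rw [trueCount_succ, trueCount_succ', h t t.2.le,
    show i + ((n - (t + 1) : ℕ) : ℤ) + 1 = i + (n - t : ℕ) by omega] at h₁
  have h₂ : (x (i + t)).toNat = (x (i + (n - (t + 1) : ℕ))).toNat := by omega
  simp only [comp_apply, window_apply, Fin.val_rev]
  revert h₂
  cases x (i + t) <;> cases x (i + (n - (t + 1) : ℕ)) <;> simp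

def IsBalanced (x : ℤ → Bool) : Prop :=
  ∀ m i j, trueCount x i m ≤ trueCount x j m + 1

end Balance

section MinimalImbalance

variable {x : ℤ → Bool} {n : ℕ} {i j : ℤ}

lemma ends_of_minimal_imbalance
    (hbal : ∀ l ≤ n + 1, ∀ s s', trueCount x s l ≤ trueCount x s' l + 1)
    (himb : trueCount x j (n + 2) + 2 ≤ trueCount x i (n + 2)) :
    x i = true ∧ x j = false ∧ x (i + 1 + n) = true ∧ x (j + 1 + n) = false ∧
      trueCount x (i + 1) n = trueCount x (j + 1) n := by
  have e₁ : trueCount x i (n + 2) = _ := trueCount_succ' x i (n + 1)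
  have e₂ : trueCount x j (n + 2) = _ := trueCount_succ' x j (n + 1)
  have e₃ := trueCount_succ x (i + 1) n
  have e₄ := trueCount_succ x (j + 1) n
  have e₅ := trueCount_succ' x i n
  have e₆ := trueCount_succ' x j n
  have b₁ := hbal (n + 1) le_rfl i j
  have b₂ := hbal (n + 1) le_rfl (i + 1) (j + 1)
  have := Bool.toNat_le (x i)
  have := Bool.toNat_le (x (i + 1 + n))
  refine ⟨Bool.toNat_eq_one.1 (by omega), Bool.toNat_eq_zero.1 (by omega),
    Bool.toNat_eq_one.1 (by omega), Bool.toNat_eq_zero.1 (by omega), by omega⟩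

/-- Balance of shorter windows bounds the prefix counts of `w` by those of `w'` and the suffix
counts likewise; equal totals force equality. -/
lemma prefix_trueCount_eq_of_minimal_imbalance
    (hbal : ∀ l ≤ n + 1, ∀ s s', trueCount x s l ≤ trueCount x s' l + 1)
    (hi : x i = true) (hj : x j = false) (hi' : x (i + 1 + n) = true)
    (hj' : x (j + 1 + n) = false) (hmid : trueCount x (i + 1) n = trueCount x (j + 1) n) :
    ∀ t ≤ n, trueCount x (i + 1) t = trueCount x (j + 1) t := by
  intro t ht
  obtain ⟨l, rfl⟩ := Nat.exists_eq_add_of_le ht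
  have b₁ := hbal (t + 1) (by omega) i j
  have b₂ := hbal (l + 1) (by omega) (i + 1 + t) (j + 1 + t)
  rw [trueCount_succ', trueCount_succ', hi, hj] at b₁
  rw [trueCount_succ, trueCount_succ, add_assoc (i + 1), add_assoc (j + 1), ← Nat.cast_add,
    hi', hj'] at b₂
  have e₁ := trueCount_add x (i + 1) t l
  have e₂ := trueCount_add x (j + 1) t l
  simp only [Bool.toNat_true, Bool.toNat_false] at b₁ b₂
  omega

lemma suffix_trueCount_eq_of_minimal_imbalance
    (hbal : ∀ l ≤ n + 1, ∀ s s', trueCount x s l ≤ trueCount x s' l + 1)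
    (hi : x i = true) (hj : x j = false) (hi' : x (i + 1 + n) = true)
    (hj' : x (j + 1 + n) = false)
    (hpre : ∀ t ≤ n, trueCount x (i + 1) t = trueCount x (j + 1) t) :
    ∀ t ≤ n, trueCount x (i + 1) t = trueCount x (i + 1 + (n - t : ℕ)) t := by
  intro t ht
  obtain ⟨l, rfl⟩ := Nat.exists_eq_add_of_le' ht
  rw [Nat.add_sub_cancel]
  have b₁ := hbal (t + 1) (by omega) i (j + 1 + l)
  have b₂ := hbal (t + 1) (by omega) (i + 1 + l) j
  rw [trueCount_succ', hi, trueCount_succ, add_assoc (j + 1), ← Nat.cast_add, hj'] at b₁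
  rw [trueCount_succ, add_assoc (i + 1), ← Nat.cast_add, hi', trueCount_succ', hj] at b₂
  have e₁ := trueCount_add x (i + 1) l t
  have e₂ := trueCount_add x (j + 1) l t
  have h₁ := hpre l (by omega)
  have h₂ := hpre (l + t) le_rfl
  have h₃ := hpre t (by omega)
  simp only [Bool.toNat_true, Bool.toNat_false] at b₁ b₂
  omega

/-- Lothaire, *Algebraic Combinatorics on Words*, Prop. 2.1.3. -/
lemma exists_palindrome_of_not_isBalanced (h : ¬ IsBalanced x) :
    ∃ n i j, window x n (i + 1) = window x n (j + 1) ∧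
      window x n (i + 1) ∘ Fin.rev = window x n (i + 1) ∧
      x i = true ∧ x (i + 1 + n) = true ∧ x j = false ∧ x (j + 1 + n) = false := by
  classical
  have hex : ∃ m i j, trueCount x j m + 2 ≤ trueCount x i m := by
    simp only [IsBalanced, not_forall, not_le] at h
    obtain ⟨m, i, j, h⟩ := h
    exact ⟨m, i, j, h⟩
  obtain ⟨i, j, himb⟩ := Nat.find_spec hex
  obtain ⟨n, hn⟩ : ∃ n, Nat.find hex = n + 2 := by
    have := trueCount_le x i (Nat.find hex)
    exact ⟨Nat.find hex - 2, by omega⟩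
  rw [hn] at himb
  have hbal : ∀ l ≤ n + 1, ∀ s s', trueCount x s l ≤ trueCount x s' l + 1 := by
    intro l hl s s'
    have := Nat.find_min hex (show l < Nat.find hex by omega)
    push Not at this
    exact Nat.lt_succ_iff.1 (this s s')
  obtain ⟨hi, hj, hi', hj', hmid⟩ := ends_of_minimal_imbalance hbal himb
  have hpre := prefix_trueCount_eq_of_minimal_imbalance hbal hi hj hi' hj' hmid
  exact ⟨n, i, j, window_eq_of_trueCount_eq hpre, window_comp_rev_eq_of_trueCount_eq
    (suffix_trueCount_eq_of_minimal_imbalance hbal hi hj hi' hj' hpre), hi, hi', hj, hj'⟩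

end MinimalImbalance

lemma IsSturmian.isBalanced {x : ℤ → Bool} (hx : IsSturmian x) : IsBalanced x := by
  by_contra h
  obtain ⟨n, i, j, hw, hpal, hi, hi', hj, hj'⟩ := exists_palindrome_of_not_isBalanced h
  have hsp : IsRightSpecial x (window x n (i + 1)) :=
    ⟨i + 1, j + 1, rfl, hw.symm, by rw [hi', hj']; decide⟩
  have hsi := hx.isRightSpecial_window_succ hpal hsp rfl (by rw [hi, hi'])
  have hsj := hx.isRightSpecial_window_succ hpal hsp hw.symm (by rw [hj, hj'])
  simpa [hi, hj] using congrFun (hx.eq_of_isRightSpecial hsi hsj) 0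

section RotationCoding

variable {x : ℤ → Bool}

lemma trueCount_mul_le {m C : ℕ} (h : ∀ s, trueCount x s m ≤ C) (j : ℤ) (k : ℕ) :
    trueCount x j (k * m) ≤ k * C := by
  induction k with
  | zero => simp
  | succ k ih =>
    rw [add_one_mul, add_one_mul, trueCount_add]
    exact add_le_add ih (h _)

lemma mul_le_trueCount_mul_add {m C : ℕ} (h : ∀ s, C ≤ trueCount x s m + 1) (j : ℤ) (k : ℕ) :
    k * C ≤ trueCount x j (k * m) + k := by
  induction k with
  | zero => simp
  | succ k ih =>
    rw [add_one_mul, add_one_mul, trueCount_add]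
    have := h (j + (k * m : ℕ))
    omega

lemma IsBalanced.exists_frequency (h : IsBalanced x) :
    ∃ β : ℝ, ∀ i m, |(trueCount x i m : ℝ) - m * β| ≤ 1 := by
  -- cut a window of length `k * m` into `m` blocks of length `k`, or into `k` blocks of length `m`
  have hcross : ∀ i j (k m : ℕ), m * trueCount x j k ≤ k * (trueCount x i m + 1) + m := by
    intro i j k m
    have h₁ := mul_le_trueCount_mul_add (fun s => h k j s) j m
    have h₂ := trueCount_mul_le (fun s => h m s i) j k
    rw [mul_comm k m] at h₂
    omega
  set f : ℤ × ℕ → ℝ := fun p => ((trueCount x p.1 (p.2 + 1) : ℝ) - 1) / (p.2 + 1)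
  have hf : ∀ i (m : ℕ), 0 < m → ∀ p, f p ≤ ((trueCount x i m : ℝ) + 1) / m := by
    rintro i m hm ⟨j, k⟩
    rw [div_le_div_iff₀ (by positivity) (by exact_mod_cast hm)]
    have : ((m * trueCount x j (k + 1) : ℕ) : ℝ) ≤
        (((k + 1) * (trueCount x i m + 1) + m : ℕ) : ℝ) := by
      exact_mod_cast hcross i j (k + 1) m
    push_cast at this
    linarith
  have hbdd : BddAbove (range f) := ⟨_, by rintro _ ⟨p, rfl⟩; exact hf 0 1 one_pos p⟩
  refine ⟨⨆ p, f p, fun i m => ?_⟩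
  rcases Nat.eq_zero_or_pos m with rfl | hm
  · simp
  have hm' : (0 : ℝ) < m := by exact_mod_cast hm
  obtain ⟨k, rfl⟩ := Nat.exists_eq_add_one.2 hm
  rw [abs_le]
  constructor
  · have := ciSup_le (hf i (k + 1) hm)
    rw [le_div_iff₀ hm'] at this
    linarith
  · have := le_ciSup hbdd (i, k)
    rw [div_le_iff₀ (by positivity)] at this
    push_cast at this ⊢
    linarith

/-- The signed number of `true`s between `0` and `i`. -/
def cumulativeCount (x : ℤ → Bool) (i : ℤ) : ℤ :=
  trueCount x 0 i.toNat - trueCount x i (-i).toNat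

lemma cumulativeCount_succ (x : ℤ → Bool) (i : ℤ) :
    cumulativeCount x (i + 1) = cumulativeCount x i + (x i).toNat := by
  rcases le_or_gt 0 i with h | h
  · rw [cumulativeCount, cumulativeCount, show (i + 1).toNat = i.toNat + 1 by omega,
      show (-(i + 1)).toNat = 0 by omega, show (-i).toNat = 0 by omega, trueCount_succ,
      show (0 : ℤ) + i.toNat = i by omega]
    simp
  · rw [cumulativeCount, cumulativeCount, show (i + 1).toNat = 0 by omega,
      show i.toNat = 0 by omega, show (-i).toNat = (-(i + 1)).toNat + 1 by omega, trueCount_succ']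
    push_cast
    ring

lemma cumulativeCount_add (x : ℤ → Bool) (i : ℤ) (m : ℕ) :
    cumulativeCount x (i + m) = cumulativeCount x i + trueCount x i m := by
  induction m with
  | zero => simp
  | succ m ih =>
    rw [Nat.cast_succ, ← add_assoc, cumulativeCount_succ, ih, trueCount_succ]
    push_cast
    ring

/-- `x i` records whether the rotation `θ ↦ θ + β` wraps around `1` at step `i`. -/
lemma IsBalanced.exists_rotation_coding (h : IsBalanced x) :
    ∃ β : ℝ, ∃ θ : ℤ → ℝ, (∀ i, θ i ∈ Icc 0 1) ∧ ∀ i, θ (i + 1) = θ i + β - (x i).toNat := by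
  obtain ⟨β, hβ⟩ := h.exists_frequency
  set L : ℤ → ℝ := fun i => cumulativeCount x i - i * β
  have hL : ∀ i j, L j ≤ L i + 1 := by
    intro i j
    rcases le_total i j with hij | hij
    · obtain ⟨m, rfl⟩ := Int.le.dest hij
      have := (abs_le.1 (hβ i m)).2
      simp only [L, cumulativeCount_add]
      push_cast
      linarith
    · obtain ⟨m, rfl⟩ := Int.le.dest hij
      have := (abs_le.1 (hβ j m)).1
      simp only [L, cumulativeCount_add]
      push_cast
      linarith
  have hbdd : BddAbove (range L) := ⟨L 0 + 1, by rintro _ ⟨j, rfl⟩; exact hL 0 j⟩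
  refine ⟨β, fun i => (⨆ j, L j) - L i, fun i => ⟨sub_nonneg.2 (le_ciSup hbdd i), ?_⟩, fun i => ?_⟩
  · rw [sub_le_iff_le_add']
    exact ciSup_le fun j => hL i j
  · simp only [L, cumulativeCount_succ]
    push_cast
    ring

variable {β : ℝ} {θ : ℤ → ℝ}

lemma rotation_coding_add (hθ : ∀ i, θ (i + 1) = θ i + β - (x i).toNat) (i : ℤ) (m : ℕ) :
    θ (i + m) = θ i + m * β - trueCount x i m := by
  induction m with
  | zero => simp
  | succ m ih =>
    rw [Nat.cast_succ, ← add_assoc, hθ, ih, trueCount_succ]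
    push_cast
    ring

lemma exists_rotation_coding_add_int (hθ : ∀ i, θ (i + 1) = θ i + β - (x i).toNat) (i d : ℤ) :
    ∃ z : ℤ, θ (i + d) = θ i + d * β + z := by
  rcases le_total 0 d with hd | hd
  · obtain ⟨m, rfl⟩ := Int.eq_ofNat_of_zero_le hd
    exact ⟨-trueCount x i m, by rw [rotation_coding_add hθ]; push_cast; ring⟩
  · obtain ⟨m, hm⟩ := Int.exists_eq_neg_ofNat hd
    have := rotation_coding_add hθ (i + d) m
    rw [hm, neg_add_cancel_right, ← sub_eq_add_neg] at this
    exact ⟨trueCount x (i - m) m, by rw [hm, ← sub_eq_add_neg]; push_cast; linarith⟩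

end RotationCoding

/-- Such a function can only drop from `1` to `0`, and then never rises again in that residue
class, so it drops at most once per class. -/
lemma eventually_add_eq_of_le {f : ℤ → ℝ} {v : ℤ} (hv : 0 < v) (hf : ∀ i, f i ∈ Icc 0 1)
    (hint : ∀ i, ∃ z : ℤ, f (i + v) = f i + z) (hle : ∀ i, f (i + v) ≤ f i) :
    ∃ N, ∀ i ≥ N, f (i + v) = f i := by
  set E := {i | f (i + v) ≠ f i}
  have hdrop : ∀ i ∈ E, f i = 1 ∧ f (i + v) = 0 := by
    intro i hi
    obtain ⟨z, hz⟩ := hint i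
    have hz₀ : z < 0 := by
      have : (z : ℝ) < 0 := by
        have := lt_of_le_of_ne (hle i) hi
        linarith
      exact_mod_cast this
    have hz₁ : (z : ℝ) ≤ -1 := by exact_mod_cast (show z ≤ -1 by omega)
    have h₁ := hf i
    have h₂ := hf (i + v)
    constructor <;> linarith [h₁.1, h₁.2, h₂.1, h₂.2]
  have hmono : ∀ i (M : ℕ), f (i + v + M * v) ≤ f (i + v) := by
    intro i M
    induction M with
    | zero => simp
    | succ M ih =>
      calc f (i + v + ↑(M + 1) * v) = f (i + v + M * v + v) := by push_cast; ring_nf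
        _ ≤ f (i + v + M * v) := hle _
        _ ≤ f (i + v) := ih
  have hinj : InjOn (fun i => i % v) E := by
    intro i hi j hj hij
    by_contra hne
    wlog hlt : i < j generalizing i j
    · exact this hj hi hij.symm (Ne.symm hne) (lt_of_le_of_ne (not_lt.1 hlt) (Ne.symm hne))
    obtain ⟨c, hc⟩ := Int.ModEq.dvd hij
    have hc₀ : 0 < c := by
      by_contra! hc'
      nlinarith
    have := hmono i (c - 1).toNat
    rw [show i + v + ((c - 1).toNat : ℕ) * v = j by
      rw [show (((c - 1).toNat : ℕ) : ℤ) = c - 1 by omega]; linear_combination -hc,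
      (hdrop j hj).1, (hdrop i hi).2] at this
    norm_num at this
  have hfin : E.Finite := Finite.of_injOn (t := Ico 0 v)
    (fun i _ => ⟨Int.emod_nonneg _ hv.ne', Int.emod_lt_of_pos _ hv⟩) hinj (finite_Ico 0 v)
  obtain ⟨N, hN⟩ := hfin.bddAbove
  exact ⟨N + 1, fun i hi => by_contra fun h => by have := hN h; omega⟩

section Irrationality

variable {x : ℤ → Bool} {β : ℝ} {θ : ℤ → ℝ}

lemma IsBalanced.eventually_trueCount_eq_of_rotation_coding (h : IsBalanced x)
    (hθ₀₁ : ∀ i, θ i ∈ Icc 0 1) (hθ : ∀ i, θ (i + 1) = θ i + β - (x i).toNat) {v : ℕ}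
    (hv : 0 < v) {u : ℤ} (hu : v * β = u) : ∃ N, ∀ i ≥ N, (trueCount x i v : ℤ) = u := by
  have hstep : ∀ i, θ (i + v) = θ i + u - trueCount x i v := by
    intro i
    rw [rotation_coding_add hθ, hu]
  have hv' : (0 : ℤ) < v := by exact_mod_cast hv
  have hsign : (∀ i, u ≤ trueCount x i v) ∨ (∀ i, (trueCount x i v : ℤ) ≤ u) := by
    by_contra! hc
    obtain ⟨⟨i, hi⟩, ⟨j, hj⟩⟩ := hc
    have := h v j i
    omega
  obtain ⟨N, hN⟩ : ∃ N, ∀ i ≥ N, θ (i + v) = θ i := by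
    rcases hsign with hs | hs
    · refine eventually_add_eq_of_le hv' hθ₀₁
        (fun i => ⟨u - trueCount x i v, by rw [hstep]; push_cast; ring⟩) fun i => ?_
      have : (u : ℝ) ≤ trueCount x i v := by exact_mod_cast hs i
      linarith [hstep i]
    · obtain ⟨N, hN⟩ := eventually_add_eq_of_le (f := fun i => 1 - θ i) hv'
        (fun i => ⟨by linarith [(hθ₀₁ i).2], by linarith [(hθ₀₁ i).1]⟩)
        (fun i => ⟨trueCount x i v - u, by rw [hstep]; push_cast; ring⟩) fun i => by
          have : (trueCount x i v : ℝ) ≤ u := by exact_mod_cast hs i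
          linarith [hstep i]
      exact ⟨N, fun i hi => by linarith [hN i hi]⟩
  refine ⟨N, fun i hi => ?_⟩
  have := hN i hi
  rw [hstep] at this
  exact_mod_cast (by linarith : (trueCount x i v : ℝ) = u)

lemma IsSturmian.irrational_of_rotation_coding (hx : IsSturmian x) (hθ₀₁ : ∀ i, θ i ∈ Icc 0 1)
    (hθ : ∀ i, θ (i + 1) = θ i + β - (x i).toNat) : Irrational β := by
  rintro ⟨q, rfl⟩
  obtain ⟨N, hN⟩ := hx.isBalanced.eventually_trueCount_eq_of_rotation_coding hθ₀₁ hθ q.den_pos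
    (u := q.num) (by exact_mod_cast q.den_mul_eq_num)
  exact hx.not_eventually_periodic q.den_pos N (add_eq_of_trueCount_eq hN)

end Irrationality

lemma exists_add_int_mem_Ioo_of_irrational {γ : ℝ} (hγ : Irrational γ) (t : ℝ) {a b : ℝ}
    (hab : a < b) : ∃ m n : ℤ, t + m * γ + n ∈ Ioo a b := by
  have hd : Dense (AddSubgroup.closure {γ, 1} : Set ℝ) :=
    dense_addSubgroupClosure_pair_iff.2 (by rwa [div_one])
  obtain ⟨y, hyG, hy⟩ := hd.exists_mem_open isOpen_Ioo (nonempty_Ioo.2 (sub_lt_sub_right hab t))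
  obtain ⟨m, n, rfl⟩ := AddSubgroup.mem_closure_pair.1 hyG
  refine ⟨m, n, ?_⟩
  simp only [zsmul_eq_mul, mul_one, mem_Ioo] at hy ⊢
  constructor <;> linarith [hy.1, hy.2]

lemma IsSturmian.not_forall_eq_true {x : ℤ → Bool} (hx : IsSturmian x) {p : ℕ} (hp : 0 < p)
    (k : ℤ) : ¬ ∀ n : ℤ, x (k + n * p) = true := by
  intro hk
  obtain ⟨β, θ, hθ₀₁, hθ⟩ := hx.isBalanced.exists_rotation_coding
  have hβ := hx.irrational_of_rotation_coding hθ₀₁ hθ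
  have hβ₁ : β < 1 := by
    obtain ⟨s, hs, -⟩ := hx.exists_forall_eq_or_eq k
    have hsf : x s = false := by simpa [show x k = true by simpa using hk 0] using hs
    have := hθ s
    rw [hsf, Bool.toNat_false, Nat.cast_zero, sub_zero] at this
    exact lt_of_le_of_ne (by linarith [(hθ₀₁ s).1, (hθ₀₁ (s + 1)).2]) hβ.ne_one
  obtain ⟨n, z, hnz⟩ := exists_add_int_mem_Ioo_of_irrational (hβ.natCast_mul hp.ne') (θ k)
    (show 0 < 1 - β by linarith)
  obtain ⟨z', hz'⟩ := exists_rotation_coding_add_int hθ k (n * p)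
  -- a `true` at `i` forces `θ i ≥ 1 - β`, but `θ (k + n * p)` lies in `(0, 1 - β)` modulo `1`
  have hkn : 1 - β ≤ θ (k + n * p) := by
    have := hθ (k + n * p)
    rw [hk n, Bool.toNat_true, Nat.cast_one] at this
    linarith [(hθ₀₁ (k + n * p + 1)).1]
  have h₁ : (0 : ℝ) < ((z' - z : ℤ) : ℝ) := by
    push_cast at hz' ⊢
    linarith [hnz.2]
  have h₂ : ((z' - z : ℤ) : ℝ) < 1 := by
    push_cast at hz' ⊢
    linarith [hnz.1, (hθ₀₁ (k + n * p)).2]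
  have h₁' : 0 < z' - z := by exact_mod_cast h₁
  have h₂' : z' - z < 1 := by exact_mod_cast h₂
  omega

theorem sturmian_no_constant_arithmetic_subsequence_general
    {A : Type*} (x : ℤ → A) (hx : IsSturmian x) :
    ¬ ∃ (p : ℕ) (k : ℤ) (a : A), 1 ≤ p ∧ ∀ n : ℤ, x (k + n * p) = a := by
  classical
  rintro ⟨p, k, a, hp, hk⟩
  obtain ⟨j, hj, hx₂⟩ := hx.exists_forall_eq_or_eq k
  rw [show x k = a by simpa using hk 0] at hj hx₂
  have hf : Injective fun c : Bool => cond c a (x j) := by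
    intro c d
    cases c <;> cases d <;> simp [hj, Ne.symm hj]
  have hy : IsSturmian fun i => decide (x i = a) := by
    refine (isSturmian_comp_iff hf).1 ?_
    convert hx using 1
    funext i
    rcases hx₂ i with h | h <;> simp [h, hj]
  exact hy.not_forall_eq_true hp k fun n => by simp [hk n]

/-- A sturmian sequence admits no constant arithmetic subsequence. -/
theorem sturmian_no_constant_arithmetic_subsequence
    {A : Type*} [Fintype A] (x : ℤ → A) (hx : IsSturmian x) :
    ¬ ∃ (p : ℕ) (k : ℤ) (a : A), 1 ≤ p ∧ ∀ n : ℤ, x (k + n * p) = a :=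
  sturmian_no_constant_arithmetic_subsequence_general x hx
end

section
/- Let d ≥ 1, let M be a d×d matrix with integer entries, and let p be a prime. Let 𝟙 = (1,…,1) ∈ ℤ^d be the row vector of ones. The following are equivalent: (1) there exists m ∈ ℕ such that every entry of the row vector 𝟙M^m is divisible by p; (2) every entry of 𝟙M^d is divisible by p. -/
/-!
Reducing modulo `p`, the condition says that the vector `𝟙` is killed by some power of the
linear map `x ↦ x M` on `𝔽_p^d`. The kernels of the powers of an endomorphism of a
`d`-dimensional space stabilise by the `d`-th power, so the `d`-th power already kills `𝟙`.
-/

namespace Matrix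

theorem vecMul_pow_card_eq_zero_of_vecMul_pow_eq_zero {n K : Type*} [Fintype n] [DecidableEq n]
    [Field K] {v : n → K} {A : Matrix n n K} {m : ℕ} (h : v ᵥ* A ^ m = 0) :
    v ᵥ* A ^ Fintype.card n = 0 := by
  have hlin (k : ℕ) : v ᵥ* A ^ k = (toLin' Aᵀ ^ k) v := by
    rw [← toLin'_pow, toLin'_apply, ← transpose_pow, ← vecMul_transpose, transpose_transpose]
  have hker : v ∈ LinearMap.ker (toLin' Aᵀ ^ m) := by
    rw [LinearMap.mem_ker, ← hlin, h]
  have := Module.End.ker_pow_le_ker_pow_finrank _ m hker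
  rwa [Module.finrank_fintype_fun_eq_card, LinearMap.mem_ker, ← hlin] at this

theorem natCast_dvd_vecMul_iff {m n : Type*} [Fintype m] (p : ℕ) (v : m → ℤ)
    (A : Matrix m n ℤ) :
    (∀ j, (p : ℤ) ∣ (v ᵥ* A) j) ↔
      (Int.castRingHom (ZMod p) ∘ v) ᵥ* A.map (Int.castRingHom (ZMod p)) = 0 := by
  simp only [funext_iff, Pi.zero_apply, ← RingHom.map_vecMul, eq_intCast,
    ZMod.intCast_zmod_eq_zero_iff_dvd]

end Matrix

theorem ones_vecMul_pow_dvd_iff_general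
    {d : ℕ} (M : Matrix (Fin d) (Fin d) ℤ) (p : ℕ) (hp : p.Prime) :
    (∃ m : ℕ, ∀ j : Fin d, (p : ℤ) ∣ Matrix.vecMul 1 (M ^ m) j) ↔
      (∀ j : Fin d, (p : ℤ) ∣ Matrix.vecMul 1 (M ^ d) j) := by
  have : Fact p.Prime := ⟨hp⟩
  have hmod (m : ℕ) : (∀ j, (p : ℤ) ∣ Matrix.vecMul 1 (M ^ m) j) ↔
      Matrix.vecMul 1 (M.map (Int.castRingHom (ZMod p)) ^ m) = 0 := by
    rw [Matrix.natCast_dvd_vecMul_iff, Matrix.map_pow]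
    simp
  refine ⟨fun ⟨m, hm⟩ => ?_, fun h => ⟨d, h⟩⟩
  rw [hmod] at hm ⊢
  simpa using Matrix.vecMul_pow_card_eq_zero_of_vecMul_pow_eq_zero hm

/-- Let `M` be a `d × d` integer matrix, `p` a prime and `𝟙 = (1,…,1)` the row vector
of ones. Then `𝟙 M^m ∈ pℤ^d` for some `m` iff `𝟙 M^d ∈ pℤ^d`. -/
theorem ones_vecMul_pow_dvd_iff
    {d : ℕ} (hd : 1 ≤ d) (M : Matrix (Fin d) (Fin d) ℤ) (p : ℕ) (hp : p.Prime) :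
    (∃ m : ℕ, ∀ j : Fin d, (p : ℤ) ∣ Matrix.vecMul 1 (M ^ m) j) ↔
      (∀ j : Fin d, (p : ℤ) ∣ Matrix.vecMul 1 (M ^ d) j) :=
  ones_vecMul_pow_dvd_iff_general M p hp
end

section
/- Let σ be a primitive substitution of constant length l on a finite alphabet A, prolongable on b.a with admissible two-sided fixed point x = σ^∞(b.a), generating a non-periodic subshift, and let h = h(σ) be its height. For i ∈ ℤ set A_i = {x_{i+nh} : n ∈ ℤ} ⊆ A. Then the sets A_0, A_1, …, A_{h−1} are pairwise disjoint and their union is A (they form a partition of A). Moreover, for all i, j ∈ ℤ, A_i = A_j if and only if i ≡ j (mod h). -/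
/-!
Since σ has constant length `l`, the letter `x (l ^ t * n + i)` is the `i`-th letter of
`σ^t (x n)`, so equal letters of `x` head equal blocks of every length `l ^ t`. An occurrence
`P > 0` of the pair `x (-1) x 0` therefore makes `x` agree around `0` and around `l ^ t * P` on
`[-l ^ t, l ^ t)`; this carries the divisibility `h ∣ p` from the positive returns `p` of `x 0`
(`h ∣ g₀`) to all of them. By primitivity `x 0` occurs at a common offset of the blocks
`σ^k (x m) = σ^k (x n)` whenever `x m = x n`, so `h ∣ l ^ k * (m - n)`, hence `h ∣ m - n` as
`h` is coprime to `l`. So every letter lives in a single residue class mod `h`, and every letter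
occurs in `x`.
-/

/-- Apply a morphism (given on letters) to a word by concatenation. -/
def substApply {A : Type*} (σ : A → List A) (w : List A) : List A := (w.map σ).flatten

/-- The iterate `σ^n(a)` of a morphism on a letter. -/
def substIter {A : Type*} (σ : A → List A) : ℕ → A → List A
  | 0, a => [a]
  | n + 1, a => substApply σ (substIter σ n a)

/-- The incidence matrix of a morphism. -/
def incidenceMatrix {A : Type*} [Fintype A] [DecidableEq A] (σ : A → List A) :
    Matrix A A ℤ := fun i j => ((σ j).count i : ℤ)

/-- The `k`-th power of the shift: `(S^k x) n = x (n + k)`. -/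
def shiftZ {A : Type*} (k : ℤ) (x : ℤ → A) : ℤ → A := fun n => x (n + k)

section Substitution

variable {A : Type*} {σ : A → List A} {l : ℕ}

theorem substApply_cons (c : A) (w : List A) : substApply σ (c :: w) = σ c ++ substApply σ w :=
  rfl

theorem length_substApply (hlen : ∀ c, (σ c).length = l) (w : List A) :
    (substApply σ w).length = l * w.length := by
  simp [substApply, List.length_flatten, Function.comp_def, hlen, mul_comm]

theorem length_substIter (hlen : ∀ c, (σ c).length = l) (t : ℕ) (c : A) :
    (substIter σ t c).length = l ^ t := by
  induction t with
  | zero => rfl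
  | succ t ih => rw [substIter, length_substApply hlen, ih, pow_succ, mul_comm]

theorem getD_substApply (hlen : ∀ c, (σ c).length = l) (w : List A) {q r : ℕ}
    (hq : q < w.length) (hr : r < l) (d d' : A) :
    (substApply σ w).getD (l * q + r) d = (σ (w.getD q d')).getD r d := by
  induction w generalizing q with
  | nil => simp at hq
  | cons c w ih =>
    rw [substApply_cons]
    rcases q with _ | q
    · rw [List.getD_append _ _ _ _ (by simpa [hlen c] using hr)]
      simp
    · rw [List.getD_append_right _ _ _ _ (by rw [hlen c]; nlinarith),
        show l * (q + 1) + r - (σ c).length = l * q + r by rw [hlen c]; ring_nf; omega]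
      simpa using ih (Nat.lt_of_succ_lt_succ hq)

theorem two_le_of_infix (hlen : ∀ c, (σ c).length = l) {u v c : A} {N : ℕ}
    (huv : [u, v] <:+: substIter σ N c) : 2 ≤ l := by
  have h2 : 2 ≤ l ^ N := by simpa [length_substIter hlen] using huv.length_le
  by_contra! hl
  have := pow_le_one₀ (n := N) (Nat.zero_le l) (by omega)
  omega

variable [Fintype A] [DecidableEq A]

theorem count_substApply (i : A) (w : List A) :
    (substApply σ w).count i = ∑ c, (σ c).count i * w.count c := by
  rw [substApply, List.count_flatten, List.map_map, Finset.sum_list_map_count]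
  refine Finset.sum_subset (Finset.subset_univ _) (fun c _ hc => ?_) |>.trans ?_
  · simp [List.count_eq_zero_of_not_mem (mt List.mem_toFinset.2 hc)]
  · simp [mul_comm]

theorem incidenceMatrix_pow_apply (k : ℕ) (i j : A) :
    (incidenceMatrix σ ^ k) i j = (substIter σ k j).count i := by
  induction k generalizing i j with
  | zero =>
    rcases eq_or_ne i j with rfl | hij
    · simp [substIter]
    · simp [substIter, hij, hij.symm]
  | succ k ih =>
    simp only [pow_succ', Matrix.mul_apply, ih, substIter, count_substApply]
    push_cast
    rfl

theorem exists_getD_substIter_eq (hlen : ∀ c, (σ c).length = l) {k : ℕ}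
    (hk : ∀ i j, 0 < (incidenceMatrix σ ^ k) i j) (c d : A) :
    ∃ r < l ^ k, (substIter σ k d).getD r d = c := by
  have hc : c ∈ substIter σ k d := by
    have := hk c d
    rw [incidenceMatrix_pow_apply] at this
    exact List.count_pos_iff.mp (by exact_mod_cast this)
  obtain ⟨r, hr, rfl⟩ := List.mem_iff_getElem.mp hc
  exact ⟨r, length_substIter hlen k d ▸ hr, List.getD_eq_getElem _ _ hr⟩

end Substitution

section FixedPoint

variable {A : Type*}

def IsIterFixedPoint (σ : A → List A) (l : ℕ) (x : ℤ → A) : Prop :=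
  ∀ (t : ℕ) (n : ℤ) {i : ℕ}, i < l ^ t →
    x (l ^ t * n + i) = (substIter σ t (x n)).getD i (x n)

variable {σ : A → List A} {l : ℕ} {x : ℤ → A}

theorem isIterFixedPoint_of_fixed (hlen : ∀ c, (σ c).length = l)
    (hfix : ∀ n : ℤ, ∀ i : Fin l, x (l * n + i) = (σ (x n)).getD i (x n)) (hl : 0 < l) :
    IsIterFixedPoint σ l x := by
  intro t n
  induction t with
  | zero =>
    intro i hi
    obtain rfl : i = 0 := by simpa using hi
    simp [substIter]
  | succ t ih =>
    intro i hi
    have hq : i / l < l ^ t := Nat.div_lt_of_lt_mul (by rwa [← pow_succ'])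
    have hr : i % l < l := Nat.mod_lt _ hl
    have hdiv : (i : ℤ) = l * (i / l : ℕ) + (i % l : ℕ) := by
      exact_mod_cast (Nat.div_add_mod i l).symm
    have hlt : i < (substIter σ (t + 1) (x n)).length := by
      rwa [length_substIter hlen]
    calc x (l ^ (t + 1) * n + i)
        = x (l * (l ^ t * n + (i / l : ℕ)) + (⟨i % l, hr⟩ : Fin l)) := by
          congr 1; rw [hdiv]; ring
      _ = (σ ((substIter σ t (x n)).getD (i / l) (x n))).getD (i % l)
            (x (l ^ t * n + (i / l : ℕ))) := by
          rw [hfix, ih hq]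
      _ = (substIter σ (t + 1) (x n)).getD (l * (i / l) + i % l) (x (l ^ t * n + (i / l : ℕ))) :=
          (getD_substApply hlen _ (by rwa [length_substIter hlen]) hr _ _).symm
      _ = (substIter σ (t + 1) (x n)).getD i (x n) := by
          -- `getD` ignores its default at an index in range
          rw [Nat.div_add_mod, List.getD_eq_getElem _ _ hlt, List.getD_eq_getElem _ _ hlt]

namespace IsIterFixedPoint

theorem apply_add_congr (hx : IsIterFixedPoint σ l x) {m n : ℤ} (hmn : x m = x n) (t : ℕ)
    {i : ℤ} (hi₀ : 0 ≤ i) (hi : i < l ^ t) : x (l ^ t * m + i) = x (l ^ t * n + i) := by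
  lift i to ℕ using hi₀
  have hi' : i < l ^ t := by exact_mod_cast hi
  rw [hx t m hi', hx t n hi', hmn]

theorem exists_apply_eq [Fintype A] [DecidableEq A] (hlen : ∀ c, (σ c).length = l)
    (hx : IsIterFixedPoint σ l x) {k : ℕ} (hk : ∀ i j, 0 < (incidenceMatrix σ ^ k) i j)
    (c : A) (n : ℤ) : ∃ r : ℕ, r < l ^ k ∧ x (l ^ k * n + r) = c := by
  obtain ⟨r, hr, hrc⟩ := exists_getD_substIter_eq hlen hk c (x n)
  exact ⟨r, hr, (hx k n hr).trans hrc⟩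

theorem exists_pos_of_infix (hlen : ∀ c, (σ c).length = l) (hx : IsIterFixedPoint σ l x)
    {u v c : A} {N : ℕ} (huv : [u, v] <:+: substIter σ N c) {r : ℕ} (hr : x r = c) :
    ∃ P : ℤ, 0 < P ∧ x (P - 1) = u ∧ x P = v := by
  obtain ⟨s, s', hs⟩ := huv
  have hlen' : s.length + 1 < l ^ N := by
    have := congrArg List.length hs
    simp only [List.length_append, List.length_cons, length_substIter hlen] at this
    omega
  have hletter (j : ℕ) (hj : j < l ^ N) :
      x (l ^ N * r + j) = (s ++ [u, v] ++ s').getD j c := by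
    rw [hx N r hj, hr, hs]
  refine ⟨l ^ N * r + s.length + 1, by positivity, ?_, ?_⟩
  · simpa [List.getD_eq_getElem?_getD, List.getElem?_append_right]
      using hletter s.length (by omega)
  · simpa [List.getD_eq_getElem?_getD, List.getElem?_append_right, add_assoc]
      using hletter _ hlen'

theorem apply_pow_mul_add_eq_apply (hx : IsIterFixedPoint σ l x) {P : ℤ} (hP : x P = x 0)
    (hP' : x (P - 1) = x (-1)) (T : ℕ) {u : ℤ} (hu : -l ^ T ≤ u) (hu' : u < l ^ T) :
    x (l ^ T * P + u) = x u := by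
  rcases le_or_gt 0 u with hu₀ | hu₀
  · simpa using hx.apply_add_congr hP T hu₀ hu'
  · convert hx.apply_add_congr hP' T (i := u + l ^ T) (by omega) (by omega) using 2 <;> ring

theorem dvd_of_apply_eq_apply_zero (hx : IsIterFixedPoint σ l x) (hl : 2 ≤ l) {h : ℤ}
    (hpos : ∀ p, 0 < p → x p = x 0 → h ∣ p) {P : ℤ} (hP₀ : 0 < P) (hP : x P = x 0)
    (hP' : x (P - 1) = x (-1)) {p : ℤ} (hp : x p = x 0) : h ∣ p := by
  set T := p.natAbs
  obtain ⟨hTp, hpT⟩ : -(l : ℤ) ^ T < p ∧ p < l ^ T := by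
    have : T < l ^ T := Nat.lt_pow_self hl
    rw [← abs_lt, Int.abs_eq_natAbs]; exact_mod_cast this
  have hTP : l ^ T ≤ l ^ T * P := le_mul_of_one_le_right (by positivity) hP₀
  have hshift := hx.apply_pow_mul_add_eq_apply hP hP' T hTp.le hpT
  have hcopy := hx.apply_pow_mul_add_eq_apply hP hP' T (u := 0) (by simp) (by positivity)
  simpa using dvd_sub (hpos (l ^ T * P + p) (by linarith) (hshift.trans hp))
    (hpos (l ^ T * P) (mul_pos (pow_pos (by omega) T) hP₀) (by simpa using hcopy))

theorem dvd_sub_of_apply_eq [Fintype A] [DecidableEq A] (hlen : ∀ c, (σ c).length = l)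
    (hx : IsIterFixedPoint σ l x) {k : ℕ} (hk : ∀ i j, 0 < (incidenceMatrix σ ^ k) i j)
    {h : ℤ} (hcop : IsCoprime h l) (hzero : ∀ p, x p = x 0 → h ∣ p) {m n : ℤ}
    (hmn : x m = x n) : h ∣ m - n := by
  obtain ⟨r, hr, hrm⟩ := hx.exists_apply_eq hlen hk (x 0) m
  have hrn : x (l ^ k * n + r) = x 0 :=
    (hx.apply_add_congr hmn k (by positivity) (by exact_mod_cast hr)).symm.trans hrm
  have := dvd_sub (hzero _ hrm) (hzero _ hrn)
  rw [add_sub_add_right_eq_sub, ← mul_sub] at this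
  exact (hcop.pow_right (n := k)).dvd_of_dvd_mul_left this

end IsIterFixedPoint

end FixedPoint

section ResidueClasses

variable {α : Type*} (f : ℤ → α) (h : ℕ)

def residueImage (i : ℤ) : Set α := Set.range fun n : ℤ => f (i + n * h)

theorem mem_residueImage_self (i : ℤ) : f i ∈ residueImage f h i :=
  ⟨0, by simp⟩

theorem residueImage_eq_of_modEq {i j : ℤ} (hij : i ≡ j [ZMOD h]) :
    residueImage f h i = residueImage f h j := by
  obtain ⟨t, ht⟩ := hij.dvd
  ext c
  constructor
  · rintro ⟨n, rfl⟩
    exact ⟨n - t, congrArg f (by linear_combination ht)⟩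
  · rintro ⟨n, rfl⟩
    exact ⟨n + t, congrArg f (by linear_combination -ht)⟩

variable {f h}

theorem modEq_of_mem_residueImage (hf : ∀ m n, f m = f n → (h : ℤ) ∣ m - n) {i j : ℤ}
    {c : α} (hi : c ∈ residueImage f h i) (hj : c ∈ residueImage f h j) :
    i ≡ j [ZMOD h] := by
  obtain ⟨m, rfl⟩ := hi
  obtain ⟨n, hn⟩ := hj
  obtain ⟨t, ht⟩ := hf _ _ hn
  exact Int.modEq_iff_dvd.mpr ⟨t + m - n, by linear_combination ht⟩

theorem residueImage_eq_iff (hf : ∀ m n, f m = f n → (h : ℤ) ∣ m - n) {i j : ℤ} :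
    residueImage f h i = residueImage f h j ↔ i ≡ j [ZMOD h] :=
  ⟨fun hij => modEq_of_mem_residueImage hf (mem_residueImage_self f h i)
    (hij ▸ mem_residueImage_self f h i), residueImage_eq_of_modEq f h⟩

theorem disjoint_residueImage (hf : ∀ m n, f m = f n → (h : ℤ) ∣ m - n) {i j : ℤ}
    (hij : ¬i ≡ j [ZMOD h]) : Disjoint (residueImage f h i) (residueImage f h j) :=
  Set.disjoint_left.mpr fun _ hi hj => hij (modEq_of_mem_residueImage hf hi hj)

theorem iUnion_residueImage [NeZero h] (hf : Function.Surjective f) :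
    ⋃ i : Fin h, residueImage f h i = Set.univ := by
  refine Set.eq_univ_of_forall fun c => ?_
  obtain ⟨r, rfl⟩ := hf c
  refine Set.mem_iUnion.mpr ⟨⟨(r : ZMod h).val, ZMod.val_lt _⟩, ?_⟩
  have hr : ((r : ZMod h).val : ℤ) ≡ r [ZMOD h] := by
    rw [ZMod.val_intCast]; exact Int.mod_modEq r h
  exact residueImage_eq_of_modEq f h hr ▸ mem_residueImage_self f h r

end ResidueClasses

theorem height_partition_general
    {A : Type*} [Fintype A] [DecidableEq A]
    (σ : A → List A) (l : ℕ)
    -- constant length l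
    (hlen : ∀ c : A, (σ c).length = l)
    -- primitive
    (hprim : ∃ k : ℕ, 0 < k ∧ ∀ i j : A, 0 < ((incidenceMatrix σ) ^ k) i j)
    -- prolongable on b.a with admissible two-sided fixed point x
    (a b : A)
    (hba : ∃ (n : ℕ) (c : A), [b, a] <:+: substIter σ n c)
    (x : ℤ → A) (hx0 : x 0 = a) (hxm1 : x (-1) = b)
    (hfix : ∀ n : ℤ, ∀ i : Fin l, x (l * n + i) = (σ (x n)).getD i (x n))
    -- g₀ = gcd{n ≥ 1 : x_n = x_0}
    (g0 : ℕ)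
    (hg0a : ∀ n : ℕ, 1 ≤ n → x n = x 0 → g0 ∣ n)
    -- h = height of σ
    (h : ℕ) (hh1 : 1 ≤ h) (hh2 : Nat.Coprime h l) (hh3 : h ∣ g0) :
    (∀ i j : Fin h, i ≠ j →
      Disjoint (Set.range fun n : ℤ => x ((i : ℤ) + n * h))
        (Set.range fun n : ℤ => x ((j : ℤ) + n * h))) ∧
    (⋃ i : Fin h, Set.range fun n : ℤ => x ((i : ℤ) + n * h)) = Set.univ ∧
    (∀ i j : ℤ,
      (Set.range fun n : ℤ => x (i + n * h)) = (Set.range fun n : ℤ => x (j + n * h))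
        ↔ i ≡ j [ZMOD h]) := by
  obtain ⟨k, -, hk⟩ := hprim
  obtain ⟨N, c, hba⟩ := hba
  have hl : 2 ≤ l := two_le_of_infix hlen hba
  have hx := isIterFixedPoint_of_fixed hlen hfix (by omega)
  have hocc (c : A) : ∃ r : ℕ, x r = c :=
    (hx.exists_apply_eq hlen hk c 0).imp fun _ hr => by simpa using hr.2
  obtain ⟨r, hr⟩ := hocc c
  obtain ⟨P, hP₀, hPb, hPa⟩ := hx.exists_pos_of_infix hlen hba hr
  have hpos (p : ℤ) (hp : 0 < p) (hpa : x p = x 0) : (h : ℤ) ∣ p := by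
    lift p to ℕ using hp.le
    exact_mod_cast hh3.trans (hg0a p (by omega) hpa)
  have hzero (p : ℤ) : x p = x 0 → (h : ℤ) ∣ p :=
    hx.dvd_of_apply_eq_apply_zero hl hpos hP₀ (hPa.trans hx0.symm) (hPb.trans hxm1.symm)
  have hdvd (m n : ℤ) : x m = x n → (h : ℤ) ∣ m - n :=
    hx.dvd_sub_of_apply_eq hlen hk (Nat.isCoprime_iff_coprime.mpr hh2) hzero
  have : NeZero h := ⟨by omega⟩
  refine ⟨fun i j hij => disjoint_residueImage hdvd fun hmod => hij ?_,
    iUnion_residueImage fun c => ?_, fun i j => residueImage_eq_iff hdvd⟩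
  · exact Fin.ext ((Int.natCast_modEq_iff.mp hmod).eq_of_lt_of_lt i.2 j.2)
  · obtain ⟨r, hr⟩ := hocc c
    exact ⟨r, hr⟩

/-- For a non-periodic primitive constant-length substitution with fixed point `x` and
height `h`, the sets `A_i = {x_{i+nh} : n ∈ ℤ}`, `0 ≤ i < h`, form a partition of the
alphabet `A`, and `A_i = A_j` iff `i ≡ j (mod h)`. -/
theorem height_partition
    {A : Type*} [Fintype A] [DecidableEq A] [TopologicalSpace A] [DiscreteTopology A]
    (σ : A → List A) (l : ℕ)
    -- constant length l
    (hlen : ∀ c : A, (σ c).length = l)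
    -- primitive
    (hprim : ∃ k : ℕ, 0 < k ∧ ∀ i j : A, 0 < ((incidenceMatrix σ) ^ k) i j)
    -- prolongable on b.a with admissible two-sided fixed point x
    (a b : A)
    (hra : (σ a).head? = some a) (hlb : (σ b).getLast? = some b)
    (hba : ∃ (n : ℕ) (c : A), [b, a] <:+: substIter σ n c)
    (x : ℤ → A) (hx0 : x 0 = a) (hxm1 : x (-1) = b)
    (hfix : ∀ n : ℤ, ∀ i : Fin l, x (l * n + i) = (σ (x n)).getD i (x n))
    -- the subshift generated by σ (closure of the orbit of x) is non-periodic: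
    -- it is not a single finite shift-orbit
    (hnp : ¬ ∃ p : ℕ, 1 ≤ p ∧ ∃ z : ℤ → A,
      closure {w : ℤ → A | ∃ k : ℤ, w = shiftZ k x} =
        {w : ℤ → A | ∃ i : ℕ, i < p ∧ w = shiftZ i z} ∧ shiftZ p z = z)
    -- g₀ = gcd{n ≥ 1 : x_n = x_0}
    (g0 : ℕ)
    (hg0a : ∀ n : ℕ, 1 ≤ n → x n = x 0 → g0 ∣ n)
    (hg0b : ∀ c : ℕ, (∀ n : ℕ, 1 ≤ n → x n = x 0 → c ∣ n) → c ∣ g0)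
    -- h = height of σ
    (h : ℕ) (hh1 : 1 ≤ h) (hh2 : Nat.Coprime h l) (hh3 : h ∣ g0)
    (hh4 : ∀ n : ℕ, 1 ≤ n → Nat.Coprime n l → n ∣ g0 → n ≤ h) :
    (∀ i j : Fin h, i ≠ j →
      Disjoint (Set.range fun n : ℤ => x ((i : ℤ) + n * h))
        (Set.range fun n : ℤ => x ((j : ℤ) + n * h))) ∧
    (⋃ i : Fin h, Set.range fun n : ℤ => x ((i : ℤ) + n * h)) = Set.univ ∧
    (∀ i j : ℤ,
      (Set.range fun n : ℤ => x (i + n * h)) = (Set.range fun n : ℤ => x (j + n * h))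
        ↔ i ≡ j [ZMOD h]) :=
  height_partition_general σ l hlen hprim a b hba x hx0 hxm1 hfix g0 hg0a h hh1 hh2 hh3
end

section
/- Let σ be a primitive substitution of constant length l on a finite alphabet A, prolongable on b.a with admissible two-sided fixed point x = σ^∞(b.a), generating a non-periodic subshift, with height h = h(σ); let φ : A* → B* be a coding and y = φ(x) ∈ B^ℤ. Let m ≥ 0 and 0 ≤ k < h·l^m, and write k = Σ_{i=0}^m k_i l^i with 0 ≤ k_m < h and 0 ≤ k_i < l for 0 ≤ i < m. Define subsets of A recursively by B_0 = {x_{k_m + nh} : n ∈ ℤ} and, for 0 ≤ j < m, B_{j+1} = {the (k_{m−1−j})-th letter (indexed from 0) of σ(c) : c ∈ B_j}. Then the alphabet of the arithmetic subsequence (y_{k + n·h·l^m})_{n∈ℤ} equals φ(B_m), i.e. {y_{k+n h l^m} : n ∈ ℤ} = {φ(c) : c ∈ B_m}. -/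
/-- The integer with base-`l` digits `d 0, d 1, …, d j`, most significant first. -/
def hornerValue (l : ℤ) (d : ℕ → ℕ) : ℕ → ℤ
  | 0 => d 0
  | j + 1 => l * hornerValue l d j + d (j + 1)

theorem hornerValue_eq_sum (l : ℤ) (d : ℕ → ℕ) (j : ℕ) :
    hornerValue l d j = ∑ i ∈ Finset.range (j + 1), (d (j - i) : ℤ) * l ^ i := by
  induction j with
  | zero => simp [hornerValue]
  | succ j ih =>
    rw [hornerValue, ih, Finset.sum_range_succ' _ (j + 1), Finset.mul_sum]
    simp only [pow_succ, Nat.sub_zero, pow_zero, mul_one, Nat.add_sub_add_right]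
    congr 1
    exact Finset.sum_congr rfl fun i _ => by ring

section FixedPoint

variable {A : Type*} {σ : A → List A} {l : ℕ} {x : ℤ → A}

theorem range_fixedPoint_digit
    (hfix : ∀ n : ℤ, ∀ i : Fin l, x (l * n + i) = (σ (x n)).getD i (x n))
    (c p : ℤ) {d : ℕ} (hd : d < l) :
    (Set.range fun n : ℤ => x (l * c + d + n * (l * p))) =
      (fun a : A => (σ a).getD d a) '' Set.range fun n : ℤ => x (c + n * p) := by
  rw [← Set.range_comp]
  congr 1
  funext n
  have hpos : (l : ℤ) * c + d + n * (l * p) = l * (c + n * p) + (⟨d, hd⟩ : Fin l) := by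
    push_cast
    ring
  rw [hpos, hfix]
  rfl

theorem range_fixedPoint_hornerValue
    (hfix : ∀ n : ℤ, ∀ i : Fin l, x (l * n + i) = (σ (x n)).getD i (x n))
    (p : ℤ) (m : ℕ) (d : ℕ → ℕ) (hd : ∀ j, 1 ≤ j → j ≤ m → d j < l) (S : ℕ → Set A)
    (hS0 : S 0 = Set.range fun n : ℤ => x (d 0 + n * p))
    (hSsucc : ∀ j, j < m → S (j + 1) = (fun a : A => (σ a).getD (d (j + 1)) a) '' S j)
    {j : ℕ} (hj : j ≤ m) :
    S j = Set.range fun n : ℤ => x (hornerValue l d j + n * (p * (l : ℤ) ^ j)) := by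
  induction j with
  | zero => simpa [hornerValue] using hS0
  | succ j ih =>
    rw [hSsucc j hj, ih (by omega), ← range_fixedPoint_digit hfix _ _ (hd _ (by omega) hj)]
    simp only [hornerValue, pow_succ]
    congr 1
    funext n
    ring_nf

end FixedPoint

theorem alphabet_of_arithmetic_subsequence_general
    {A B : Type*}
    (σ : A → List A) (l : ℕ)
    (x : ℤ → A)
    (hfix : ∀ n : ℤ, ∀ i : Fin l, x (l * n + i) = (σ (x n)).getD i (x n))
    -- g₀ and the height h
    (h : ℕ)
    -- the coding φ and y = φ(x)
    (φ : A → B) (y : ℤ → B) (hy : ∀ n : ℤ, y n = φ (x n))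
    -- k with 0 ≤ k < h·l^m and its expansion in base (l^m, …, l, 1)
    (m : ℕ) (k : ℤ)
    (kd : ℕ → ℕ) (hkdl : ∀ i : ℕ, i < m → kd i < l)
    (hksum : k = ∑ i ∈ Finset.range (m + 1), (kd i : ℤ) * (l : ℤ) ^ i)
    -- the recursively defined alphabets B_j
    (Bs : ℕ → Set A)
    (hB0 : Bs 0 = Set.range fun n : ℤ => x ((kd m : ℤ) + n * h))
    (hBsucc : ∀ j : ℕ, j < m →
      Bs (j + 1) = (fun c : A => (σ c).getD (kd (m - 1 - j)) c) '' Bs j) :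
    (Set.range fun n : ℤ => y (k + n * ((h : ℤ) * (l : ℤ) ^ m))) = φ '' Bs m := by
  have hk : k = hornerValue l (fun i => kd (m - i)) m := by
    rw [hornerValue_eq_sum, hksum]
    exact Finset.sum_congr rfl fun i hi => by
      rw [Nat.sub_sub_self (Finset.mem_range_succ_iff.mp hi)]
  have hBm := range_fixedPoint_hornerValue hfix h m (fun i => kd (m - i))
    (fun j hj1 _ => hkdl _ (by omega)) Bs (by simpa using hB0)
    (fun j hj => by rw [hBsucc j hj, Nat.sub_sub, Nat.add_comm 1 j]) le_rfl
  rw [hBm, ← hk, ← Set.range_comp]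
  simp only [Function.comp_def, hy]

/-- For a non-periodic primitive constant-length-`l` substitution `σ` with height `h`,
fixed point `x` and coding `φ` with `y = φ(x)`: if `0 ≤ k < h·l^m` has expansion
`k = Σ k_i l^i` (`0 ≤ k_m < h`, `0 ≤ k_i < l`), and `B_0 = {x_{k_m+nh} : n}`,
`B_{j+1} = {σ(c)_{k_{m-1-j}} : c ∈ B_j}`, then the alphabet of `(y_{k+n·h·l^m})_n`
equals `φ(B_m)`. -/
theorem alphabet_of_arithmetic_subsequence
    {A B : Type*} [Fintype A] [DecidableEq A] [Fintype B]
    [TopologicalSpace A] [DiscreteTopology A]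
    (σ : A → List A) (l : ℕ)
    (hlen : ∀ c : A, (σ c).length = l)
    (hprim : ∃ k : ℕ, 0 < k ∧ ∀ i j : A, 0 < ((incidenceMatrix σ) ^ k) i j)
    (a b : A)
    (hra : (σ a).head? = some a) (hlb : (σ b).getLast? = some b)
    (hba : ∃ (n : ℕ) (c : A), [b, a] <:+: substIter σ n c)
    (x : ℤ → A) (hx0 : x 0 = a) (hxm1 : x (-1) = b)
    (hfix : ∀ n : ℤ, ∀ i : Fin l, x (l * n + i) = (σ (x n)).getD i (x n))
    (hnp : ¬ ∃ p : ℕ, 1 ≤ p ∧ ∃ z : ℤ → A,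
      closure {w : ℤ → A | ∃ k : ℤ, w = shiftZ k x} =
        {w : ℤ → A | ∃ i : ℕ, i < p ∧ w = shiftZ i z} ∧ shiftZ p z = z)
    -- g₀ and the height h
    (g0 : ℕ)
    (hg0a : ∀ n : ℕ, 1 ≤ n → x n = x 0 → g0 ∣ n)
    (hg0b : ∀ c : ℕ, (∀ n : ℕ, 1 ≤ n → x n = x 0 → c ∣ n) → c ∣ g0)
    (h : ℕ) (hh1 : 1 ≤ h) (hh2 : Nat.Coprime h l) (hh3 : h ∣ g0)
    (hh4 : ∀ n : ℕ, 1 ≤ n → Nat.Coprime n l → n ∣ g0 → n ≤ h)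
    -- the coding φ and y = φ(x)
    (φ : A → B) (y : ℤ → B) (hy : ∀ n : ℤ, y n = φ (x n))
    -- k with 0 ≤ k < h·l^m and its expansion in base (l^m, …, l, 1)
    (m : ℕ) (k : ℤ) (hk0 : 0 ≤ k) (hkm : k < (h : ℤ) * (l : ℤ) ^ m)
    (kd : ℕ → ℕ) (hkdl : ∀ i : ℕ, i < m → kd i < l) (hkdm : kd m < h)
    (hksum : k = ∑ i ∈ Finset.range (m + 1), (kd i : ℤ) * (l : ℤ) ^ i)
    -- the recursively defined alphabets B_j
    (Bs : ℕ → Set A)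
    (hB0 : Bs 0 = Set.range fun n : ℤ => x ((kd m : ℤ) + n * h))
    (hBsucc : ∀ j : ℕ, j < m →
      Bs (j + 1) = (fun c : A => (σ c).getD (kd (m - 1 - j)) c) '' Bs j) :
    (Set.range fun n : ℤ => y (k + n * ((h : ℤ) * (l : ℤ) ^ m))) = φ '' Bs m :=
  alphabet_of_arithmetic_subsequence_general σ l x hfix h φ y hy m k kd hkdl hksum Bs hB0 hBsucc
end
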